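/- arXiv:0909.2744 — 4 statements merged into one kernel-verified Lean document; each statement's English description precedes it below -/
import Mathlib

section
/- Let k be a positive integer and let G be a connected graph on a finite vertex set which is not Hamiltonian and which is a k-expander. Then the number of non-edges of G that are boosters is at least (k+1)^2/2. -/
open SimpleGraph

/-- The external neighborhood of a vertex subset `U` in a graph `G`:
the set of vertices outside `U` having a neighbor in `U`. -/
def extNbhd {V : Type*} [Fintype V] [DecidableEq V] (G : SimpleGraph V)
    [DecidableRel G.Adj] (U : Finset V) : Finset V :=
  Finset.univ.filter (fun v => v ∉ U ∧ ∃ u ∈ U, G.Adj u v)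

/-- A graph is a `k`-expander if every set `U` of at most `k` vertices satisfies
`|N_G(U)| ≥ 2|U|`. -/
def IsKExpander {V : Type*} [Fintype V] [DecidableEq V] (G : SimpleGraph V)
    [DecidableRel G.Adj] (k : ℕ) : Prop :=
  ∀ U : Finset V, U.card ≤ k → 2 * U.card ≤ (extNbhd G U).card

/-- The maximum length (number of edges) of a path in `G`. -/
noncomputable def maxPathLen {V : Type*} (G : SimpleGraph V) : ℕ :=
  sSup {n | ∃ (u v : V) (p : G.Walk u v), p.IsPath ∧ p.length = n}

/-- A non-edge `(u, v)` of `G` is a booster if adding it to `G` yields a graph which is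
Hamiltonian or whose longest path is strictly longer than the longest path of `G`. -/
def IsBooster {V : Type*} [Fintype V] [DecidableEq V] (G : SimpleGraph V) (u v : V) : Prop :=
  u ≠ v ∧ ¬ G.Adj u v ∧
    ((G ⊔ fromEdgeSet {s(u, v)}).IsHamiltonian ∨
      maxPathLen G < maxPathLen (G ⊔ fromEdgeSet {s(u, v)}))

/-!
The two ends of a longest path `P` are never adjacent, and adding the edge between them closes
`P` into a cycle. If this cycle misses a vertex, connectivity gives an edge leaving it, and
opening the cycle next to that edge yields a longer path; so the ends of every longest path form
a booster. By Pósa's rotation lemma, in a `k`-expander the longest paths starting at one end of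
a longest path end in more than `k` vertices. Applying this from one end `b` of `P`, and then
again from each of the more than `k` vertices `x` so obtained, gives at least `(k + 1)²` ordered
pairs `(x, y)` of ends of longest paths, hence at least `(k + 1)² / 2` boosters.
-/

namespace SimpleGraph

variable {V : Type*} {G : SimpleGraph V}

namespace Walk

def IsLongestPath {u v : V} (p : G.Walk u v) : Prop :=
  p.IsPath ∧ p.length = maxPathLen G

theorem IsLongestPath.reverse {u v : V} {p : G.Walk u v} (hp : p.IsLongestPath) :
    p.reverse.IsLongestPath :=
  ⟨hp.1.reverse, by rw [length_reverse, hp.2]⟩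

end Walk

theorem bddAbove_pathLengths [Fintype V] :
    BddAbove {n | ∃ (u v : V) (p : G.Walk u v), p.IsPath ∧ p.length = n} :=
  ⟨Fintype.card V, fun _ ⟨_, _, _, hp, hn⟩ => hn ▸ hp.length_lt.le⟩

theorem Walk.IsPath.length_le_maxPathLen [Fintype V] {u v : V} {p : G.Walk u v}
    (hp : p.IsPath) : p.length ≤ maxPathLen G :=
  le_csSup bddAbove_pathLengths ⟨u, v, p, hp, rfl⟩

theorem exists_isLongestPath [Fintype V] [Nonempty V] (G : SimpleGraph V) :
    ∃ (u v : V) (p : G.Walk u v), p.IsLongestPath := by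
  have hne : {n | ∃ (u v : V) (p : G.Walk u v), p.IsPath ∧ p.length = n}.Nonempty :=
    ⟨0, Classical.arbitrary V, Classical.arbitrary V, .nil, .nil, rfl⟩
  obtain ⟨u, v, p, hp, hlen⟩ := Nat.sSup_mem hne bddAbove_pathLengths
  exact ⟨u, v, p, hp, hlen⟩

theorem IsKExpander.two_le_maxPathLen [Fintype V] [DecidableEq V] [DecidableRel G.Adj]
    [Nonempty V] {k : ℕ} (hexp : IsKExpander G k) (hk : 0 < k) : 2 ≤ maxPathLen G := by
  obtain ⟨v⟩ := ‹Nonempty V›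
  have hcard := hexp {v} (by rwa [Finset.card_singleton])
  rw [Finset.card_singleton, mul_one] at hcard
  obtain ⟨a, ha, b, hb, hab⟩ := Finset.one_lt_card.mp hcard
  simp only [extNbhd, Finset.mem_filter, Finset.mem_singleton, exists_eq_left,
    Finset.mem_univ, true_and] at ha hb
  have hp : (Walk.cons ha.2.symm (Walk.cons hb.2 .nil)).IsPath := by
    simp [ha.1, hab, hb.2.ne]
  simpa using hp.length_le_maxPathLen

theorem Walk.IsCycle.exists_isPath_length_eq_of_adj [DecidableEq V] {v u w : V}
    {c : G.Walk v v} (hc : c.IsCycle) (hu : u ∈ c.support) (hw : w ∉ c.support)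
    (huw : G.Adj u w) : ∃ (z : V) (r : G.Walk z w), r.IsPath ∧ r.length = c.length := by
  have hc' := hc.rotate hu
  have hw' : w ∉ (c.rotate u hu).support := by rwa [mem_support_rotate_iff]
  rw [← length_rotate c u hu]
  generalize c.rotate u hu = c' at hc' hw'
  cases c' with
  | nil => exact absurd hc' not_isCycle_nil
  | cons h d =>
    refine ⟨_, d.concat huw, ((cons_isCycle_iff d h).mp hc').1.concat ?_ huw, by simp⟩
    exact fun hd => hw' (by simp [hd])

theorem Walk.IsPath.isHamiltonian_or_exists_longer_of_adj [Fintype V] [DecidableEq V]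
    (hconn : G.Connected) {a b : V} {p : G.Walk a b} (hp : p.IsPath) (hlen : 2 ≤ p.length)
    (hba : G.Adj b a) :
    G.IsHamiltonian ∨ ∃ (x y : V) (r : G.Walk x y), r.IsPath ∧ r.length = p.length + 1 := by
  have hc : (cons hba p).IsCycle :=
    isCycle_iff_isPath_tail_and_le_length.mpr ⟨by simpa using hp, by simp; omega⟩
  by_cases hspan : ∀ v, v ∈ p.support
  · exact Or.inl fun _ => ⟨b, cons hba p,
      isHamiltonianCycle_iff_isCycle_and_support_count_tail_eq_one.mpr
        ⟨hc, by simpa [IsHamiltonian] using hp.isHamiltonian_of_mem hspan⟩⟩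
  push Not at hspan
  obtain ⟨w, hw⟩ := hspan
  obtain ⟨q⟩ := hconn.preconnected a w
  obtain ⟨d, -, hd, hdw⟩ := q.exists_boundary_dart {v | v ∈ p.support} p.start_mem_support hw
  have hdw' : d.snd ∉ (cons hba p).support := by
    simpa [not_or] using ⟨fun h => hdw (h ▸ p.end_mem_support), hdw⟩
  obtain ⟨z, r, hr, hrl⟩ :=
    hc.exists_isPath_length_eq_of_adj (by simp [Set.mem_ofPred_eq.mp hd]) hdw' d.adj
  exact Or.inr ⟨z, _, r, hr, by simpa using hrl⟩

theorem Walk.IsLongestPath.isBooster [Fintype V] [DecidableEq V] (hconn : G.Connected)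
    (hham : ¬ G.IsHamiltonian) (hlen : 2 ≤ maxPathLen G) {a b : V} {p : G.Walk a b}
    (hp : p.IsLongestPath) : IsBooster G a b := by
  obtain ⟨hpath, hplen⟩ := hp
  have hab : a ≠ b := by
    rintro rfl
    have := Walk.length_eq_zero_iff.mpr (Walk.isPath_iff_nil.mp hpath)
    omega
  have hnadj : ¬ G.Adj a b := fun hadj => by
    obtain hH | ⟨_, _, r, hr, hrl⟩ :=
      hpath.isHamiltonian_or_exists_longer_of_adj hconn (by omega) hadj.symm
    · exact hham hH
    · have := hr.length_le_maxPathLen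
      omega
  refine ⟨hab, hnadj, ?_⟩
  have hle : G ≤ G ⊔ fromEdgeSet {s(a, b)} := le_sup_left
  have hba : (G ⊔ fromEdgeSet {s(a, b)}).Adj b a := Or.inr ⟨Sym2.eq_swap, hab.symm⟩
  obtain hH | ⟨_, _, r, hr, hrl⟩ :=
    (hpath.mapLe hle).isHamiltonian_or_exists_longer_of_adj (hconn.mono hle)
      (by simp; omega) hba
  · exact Or.inl hH
  · have := hr.length_le_maxPathLen
    rw [Walk.length_mapLe] at hrl
    exact Or.inr (by omega)

namespace Walk

theorem IsPath.ncard_neighborSet_toSubgraph_start_le_one {u v : V} {p : G.Walk u v}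
    (hp : p.IsPath) : (p.toSubgraph.neighborSet u).ncard ≤ 1 := by
  have hsub : p.toSubgraph.neighborSet u ⊆ {p.snd} :=
    fun _ hw => (hp.snd_of_toSubgraph_adj hw).symm
  exact (Set.ncard_le_ncard hsub).trans (Set.ncard_singleton _).le

theorem IsPath.ncard_neighborSet_toSubgraph_end_le_one {u v : V} {p : G.Walk u v}
    (hp : p.IsPath) : (p.toSubgraph.neighborSet v).ncard ≤ 1 := by
  simpa using hp.reverse.ncard_neighborSet_toSubgraph_start_le_one

theorem IsPath.ncard_neighborSet_toSubgraph_le_two {u v : V} {p : G.Walk u v}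
    (hp : p.IsPath) (w : V) : (p.toSubgraph.neighborSet w).ncard ≤ 2 := by
  by_cases hw : w ∈ p.support
  · obtain ⟨i, rfl, hi⟩ := mem_support_iff_exists_getVert.mp hw
    rcases Nat.eq_zero_or_pos i with rfl | hi0
    · simpa using hp.ncard_neighborSet_toSubgraph_start_le_one.trans one_le_two
    rcases hi.lt_or_eq with hlt | rfl
    · rw [hp.neighborSet_toSubgraph_internal hi0.ne' hlt]
      exact (Set.ncard_insert_le _ _).trans (by simp)
    · simpa using hp.ncard_neighborSet_toSubgraph_end_le_one.trans one_le_two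
  · have hempty : p.toSubgraph.neighborSet w = ∅ :=
      Set.eq_empty_of_forall_notMem fun _ hadj =>
        hw (p.mem_verts_toSubgraph.mp hadj.fst_mem)
    simp [hempty]

theorem IsPath.ncard_biUnion_neighborSet_toSubgraph_lt {u v : V} {p : G.Walk u v}
    (hp : p.IsPath) {R : Finset V} (hv : v ∈ R) :
    (⋃ x ∈ R, p.toSubgraph.neighborSet x).ncard < 2 * R.card := by
  classical
  calc (⋃ x ∈ R, p.toSubgraph.neighborSet x).ncard
      ≤ ∑ x ∈ R, (p.toSubgraph.neighborSet x).ncard := R.set_ncard_biUnion_le _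
    _ = ∑ x ∈ R.erase v, (p.toSubgraph.neighborSet x).ncard
          + (p.toSubgraph.neighborSet v).ncard := (Finset.sum_erase_add R _ hv).symm
    _ ≤ (R.erase v).card * 2 + 1 := by
        gcongr
        · exact Finset.sum_le_card_nsmul _ _ _ fun x _ => hp.ncard_neighborSet_toSubgraph_le_two x
        · exact hp.ncard_neighborSet_toSubgraph_end_le_one
    _ < 2 * R.card := by
        rw [Finset.card_erase_of_mem hv]
        have := Finset.card_pos.mpr ⟨v, hv⟩
        omega

end Walk

/-- `PosaRotation P q`: the path `q` arises from `P` by Pósa rotations keeping the first vertex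
`v₀` fixed. The rotation of `q₁ ++ (y → z ++ q₂)`, ending at `x`, along an edge `x y` replaces
the edge `y z` by `y x` and reverses `q₂`; it ends at `z`. -/
inductive PosaRotation {v₀ t₀ : V} (P : G.Walk v₀ t₀) : ∀ {x : V}, G.Walk v₀ x → Prop
  | refl : PosaRotation P P
  | step {x y z : V} (q₁ : G.Walk v₀ y) (hyz : G.Adj y z) (q₂ : G.Walk z x) (hxy : G.Adj x y) :
      PosaRotation P (q₁.append (.cons hyz q₂)) →
      PosaRotation P (q₁.append (.cons hxy.symm q₂.reverse))

def rotationEnds {v₀ t₀ : V} (P : G.Walk v₀ t₀) : Set V :=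
  {x | ∃ q : G.Walk v₀ x, PosaRotation P q}

namespace PosaRotation

variable {v₀ t₀ : V} {P : G.Walk v₀ t₀}

theorem mem_rotationEnds {x : V} {q : G.Walk v₀ x} (hq : PosaRotation P q) :
    x ∈ rotationEnds P :=
  ⟨q, hq⟩

theorem support_perm {x : V} {q : G.Walk v₀ x} (hq : PosaRotation P q) :
    q.support.Perm P.support := by
  induction hq with
  | refl => rfl
  | step q₁ hyz q₂ hxy _ ih =>
    simp only [Walk.support_append, Walk.support_cons, Walk.support_reverse,
      List.tail_cons] at ih ⊢
    exact (q₂.support.reverse_perm.append_left _).trans ih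

theorem length_eq {x : V} {q : G.Walk v₀ x} (hq : PosaRotation P q) :
    q.length = P.length := by
  simpa using hq.support_perm.length_eq

theorem isLongestPath {x : V} {q : G.Walk v₀ x} (hq : PosaRotation P q)
    (hP : P.IsLongestPath) : q.IsLongestPath :=
  ⟨(Walk.isPath_def _).mpr (hq.support_perm.nodup_iff.mpr hP.1.support_nodup),
    hq.length_eq.trans hP.2⟩

/-- A rotation only changes edges at its pivot `y`, its old end `x` and its new end `z`. While the
edges at `w` are those of `P`, `w` can only be the pivot if its `P`-neighbour `z` becomes an end. -/
theorem mem_edges_iff {w : V} (hw : w ∉ rotationEnds P)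
    (hPw : ∀ z, s(w, z) ∈ P.edges → z ∉ rotationEnds P)
    {x : V} {q : G.Walk v₀ x} (hq : PosaRotation P q) (z : V) :
    s(w, z) ∈ q.edges ↔ s(w, z) ∈ P.edges := by
  induction hq generalizing z with
  | refl => rfl
  | @step x y z' q₁ hyz q₂ hxy hq ih =>
    have hnew := (hq.step q₁ hyz q₂ hxy).mem_rotationEnds
    have hwx : w ≠ x := fun h => hw (h ▸ hq.mem_rotationEnds)
    have hwz : w ≠ z' := fun h => hw (h ▸ hnew)
    have hwy : w ≠ y := by
      rintro rfl
      exact hPw z' ((ih z').mp (by simp)) hnew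
    have ih := ih z
    simp only [Walk.edges_append, Walk.edges_cons, Walk.edges_reverse, List.mem_append,
      List.mem_cons, List.mem_reverse, Sym2.eq_iff, hwx, hwy, hwz, false_and, or_false,
      false_or] at ih ⊢
    exact ih

end PosaRotation

/-- The vertex `w` lies on `q`, as `q` is a longest path, and rotating `q` along `u w` turns the
successor `z` of `w` on `q` into an end; by `PosaRotation.mem_edges_iff`, `w z` is an edge of
`P` unless `w` already has a `P`-neighbour among the ends. -/
theorem Walk.IsLongestPath.exists_rotationEnd_toSubgraph_adj [Fintype V] [DecidableEq V]
    {v₀ t₀ : V} {P : G.Walk v₀ t₀} (hP : P.IsLongestPath) {u w : V} (hu : u ∈ rotationEnds P)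
    (hw : w ∉ rotationEnds P) (huw : G.Adj u w) :
    ∃ z ∈ rotationEnds P, P.toSubgraph.Adj w z := by
  by_contra! hPw
  replace hPw : ∀ z, s(w, z) ∈ P.edges → z ∉ rotationEnds P :=
    fun z hz hzR => hPw z hzR (adj_toSubgraph_iff_mem_edges.mpr hz)
  obtain ⟨q, hq⟩ := hu
  have hwq : w ∈ q.support := by
    by_contra hwq
    have hlong := ((hq.isLongestPath hP).1.concat hwq huw).length_le_maxPathLen
    rw [Walk.length_concat, (hq.isLongestPath hP).2] at hlong
    omega
  have hwu : w ≠ u := fun h => hw (h ▸ hq.mem_rotationEnds)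
  obtain ⟨z, hwz, q₂, hdrop⟩ := (q.dropUntil w hwq).exists_eq_cons_of_ne hwu
  have hsplit : q = (q.takeUntil w hwq).append (.cons hwz q₂) := by
    rw [← hdrop, Walk.take_spec]
  have hrot : PosaRotation P ((q.takeUntil w hwq).append (.cons huw.symm q₂.reverse)) :=
    .step _ hwz q₂ huw (hsplit ▸ hq)
  have hedge : s(w, z) ∈ q.edges := by
    rw [hsplit]
    simp
  exact hPw z ((PosaRotation.mem_edges_iff hw hPw hq z).mp hedge) hrot.mem_rotationEnds

/-- Pósa's lemma: the outside neighbours of the set `R` of ends are `P`-neighbours of `R`, of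
which there are fewer than `2 |R|`, so expansion forces `|R| > k`. -/
theorem IsKExpander.lt_ncard_rotationEnds [Fintype V] [DecidableEq V] [DecidableRel G.Adj]
    {k : ℕ} (hexp : IsKExpander G k) {v₀ t₀ : V} {P : G.Walk v₀ t₀} (hP : P.IsLongestPath) :
    k < (rotationEnds P).ncard := by
  classical
  by_contra! hk
  set R := (rotationEnds P).toFinset
  have hR : R.card ≤ k := by rwa [← Set.ncard_eq_toFinset_card']
  have hbdry : (extNbhd G R : Set V) ⊆ ⋃ x ∈ R, P.toSubgraph.neighborSet x := by
    intro w hw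
    simp only [extNbhd, Finset.coe_filter, Finset.mem_univ, true_and, Set.mem_toFinset, R] at hw
    obtain ⟨hw, u, hu, huw⟩ := hw
    obtain ⟨z, hz, hwz⟩ := hP.exists_rotationEnd_toSubgraph_adj hu hw huw
    exact Set.mem_biUnion (Set.mem_toFinset.mpr hz) hwz.symm
  have hlt := (Set.ncard_le_ncard hbdry).trans_lt
    (hP.1.ncard_biUnion_neighborSet_toSubgraph_lt
      (Set.mem_toFinset.mpr PosaRotation.refl.mem_rotationEnds))
  rw [Set.ncard_coe_finset] at hlt
  have := hexp R hR
  omega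

theorem IsKExpander.lt_ncard_longestPath_ends [Fintype V] [DecidableEq V] [DecidableRel G.Adj]
    {k : ℕ} (hexp : IsKExpander G k) {v₀ t₀ : V} {P : G.Walk v₀ t₀} (hP : P.IsLongestPath) :
    k < {x | ∃ q : G.Walk v₀ x, q.IsLongestPath}.ncard :=
  (hexp.lt_ncard_rotationEnds hP).trans_le <|
    Set.ncard_le_ncard fun _ ⟨q, hq⟩ => ⟨q, hq.isLongestPath hP⟩

end SimpleGraph

theorem mul_le_two_mul_ncard_sym2 {V : Type*} [Fintype V] (r : V → V → Prop) {m : ℕ}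
    {S : Set V} (hS : m ≤ S.ncard) (hr : ∀ x ∈ S, m ≤ {y | r x y}.ncard) :
    m * m ≤ 2 * {e : Sym2 V | ∃ u v, e = s(u, v) ∧ r u v}.ncard := by
  classical
  set D : Finset (V × V) := Finset.univ.filter fun p => r p.1 p.2
  have hD : m * m ≤ D.card :=
    calc m * m ≤ ∑ _ ∈ S.toFinset, m := by
          rw [Finset.sum_const, smul_eq_mul, ← Set.ncard_eq_toFinset_card']
          exact Nat.mul_le_mul_right m hS
      _ ≤ ∑ x ∈ S.toFinset, {y | r x y}.ncard :=
          Finset.sum_le_sum fun x hx => hr x (Set.mem_toFinset.mp hx)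
      _ ≤ ∑ x, {y | r x y}.ncard := Finset.sum_le_sum_of_subset (Finset.subset_univ _)
      _ = D.card := by
          rw [Finset.card_filter, Fintype.sum_prod_type]
          refine Finset.sum_congr rfl fun x _ => ?_
          rw [Set.ncard_eq_toFinset_card', Set.toFinset_ofPred, Finset.card_filter]
  have hfiber : D.card ≤ 2 * (D.image fun p => s(p.1, p.2)).card := by
    refine Finset.card_le_mul_card_image D 2 fun e he => ?_
    obtain ⟨⟨u, v⟩, -, rfl⟩ := Finset.mem_image.mp he
    refine (Finset.card_le_card (t := {(u, v), (v, u)}) fun p hp => ?_).trans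
      (Finset.card_insert_le _ _)
    rcases Sym2.eq_iff.mp (Finset.mem_filter.mp hp).2 with ⟨h₁, h₂⟩ | ⟨h₁, h₂⟩ <;>
      simp [Prod.ext_iff, h₁, h₂]
  have himage : ((D.image fun p => s(p.1, p.2) : Finset (Sym2 V)) : Set (Sym2 V)) ⊆
      {e | ∃ u v, e = s(u, v) ∧ r u v} := by
    intro e he
    obtain ⟨⟨u, v⟩, huv, rfl⟩ := Finset.mem_coe.mp he |> Finset.mem_image.mp
    exact ⟨u, v, rfl, (Finset.mem_filter.mp huv).2⟩
  have hle := Set.ncard_le_ncard himage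
  rw [Set.ncard_coe_finset] at hle
  omega

theorem stmt0 {V : Type*} [Fintype V] [DecidableEq V] (G : SimpleGraph V)
    [DecidableRel G.Adj] (k : ℕ) (hk : 0 < k)
    (hconn : G.Connected) (hham : ¬ G.IsHamiltonian) (hexp : IsKExpander G k) :
    ((k + 1 : ℝ) ^ 2) / 2 ≤
      ({e : Sym2 V | ∃ u v : V, e = s(u, v) ∧ IsBooster G u v}.ncard : ℝ) := by
  have : Nonempty V := hconn.nonempty
  have hlen := hexp.two_le_maxPathLen hk
  obtain ⟨_, b, P, hP⟩ := exists_isLongestPath G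
  have hboosters : ∀ x ∈ {x | ∃ q : G.Walk b x, q.IsLongestPath},
      k + 1 ≤ {y | IsBooster G x y}.ncard := fun x ⟨q, hq⟩ =>
    (hexp.lt_ncard_longestPath_ends hq.reverse).trans_le <|
      Set.ncard_le_ncard fun _ ⟨r, hr⟩ => hr.isBooster hconn hham hlen
  have hcount := mul_le_two_mul_ncard_sym2 (IsBooster G)
    (hexp.lt_ncard_longestPath_ends hP.reverse) hboosters
  rw [div_le_iff₀ two_pos, sq, mul_comm _ (2 : ℝ)]
  exact_mod_cast hcount
end

section
/- Let k be a positive integer and let G=(V,E) be a graph with minimum degree at least 12 which is not a k-expander. Then there exist disjoint vertex subsets A, B ⊆ V with 5 ≤ |A| ≤ k, |B| ≤ 2|A| − 1, and N_G(A) ⊆ B, such that the number of edges of G having at least one endpoint in A is at least 6|A|, and every edge of G with at least one endpoint in A has both endpoints in A ∪ B. -/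
open SimpleGraph

theorem stmt5 {V : Type*} [Fintype V] [DecidableEq V] (G : SimpleGraph V)
    [DecidableRel G.Adj] (k : ℕ) (hk : 0 < k)
    (hdeg : ∀ v : V, 12 ≤ G.degree v) (hnexp : ¬ IsKExpander G k) :
    ∃ A B : Finset V, Disjoint A B ∧ 5 ≤ A.card ∧ A.card ≤ k ∧
      B.card ≤ 2 * A.card - 1 ∧ extNbhd G A ⊆ B ∧
      6 * A.card ≤ (G.edgeFinset.filter (fun e => ∃ v ∈ A, v ∈ e)).card ∧
      ∀ e ∈ G.edgeFinset, (∃ v ∈ A, v ∈ e) → ∀ w ∈ e, w ∈ A ∪ B := by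
  simp only [IsKExpander, not_forall] at hnexp
  obtain ⟨A, hAk, hsmall⟩ := hnexp
  push_neg at hsmall
  set B := extNbhd G A with hB
  have hBcard : B.card ≤ 2 * A.card - 1 := by omega
  have hAne : A.Nonempty := by
    rcases A.eq_empty_or_nonempty with h | h
    · simp [h] at hsmall
    · exact h
  have hdisj : Disjoint A B := by
    rw [Finset.disjoint_right]
    intro v hv
    simp only [hB, extNbhd, Finset.mem_filter] at hv
    exact hv.2.1
  -- every edge touching A has both ends in A ∪ B
  have hclosed : ∀ e ∈ G.edgeFinset, (∃ v ∈ A, v ∈ e) → ∀ w ∈ e, w ∈ A ∪ B := by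
    intro e he hv w hw
    obtain ⟨v, hvA, hve⟩ := hv
    rw [mem_edgeFinset] at he
    induction e with
    | h a b =>
      rw [Sym2.mem_iff] at hve hw
      rw [mem_edgeSet] at he
      by_cases hwA : w ∈ A
      · exact Finset.mem_union_left _ hwA
      · refine Finset.mem_union_right _ ?_
        simp only [hB, extNbhd, Finset.mem_filter, Finset.mem_univ, true_and]
        refine ⟨hwA, v, hvA, ?_⟩
        have hvw : v ≠ w := fun h => hwA (h ▸ hvA)
        rcases hve with rfl | rfl <;> rcases hw with rfl | rfl
        · exact absurd rfl hvw
        · exact he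
        · exact he.symm
        · exact absurd rfl hvw
  -- neighbors of v ∈ A lie in (A \ {v}) ∪ B
  have hnbr : ∀ v ∈ A, G.neighborFinset v ⊆ (A.erase v) ∪ B := by
    intro v hv w hw
    rw [mem_neighborFinset] at hw
    by_cases hwA : w ∈ A
    · exact Finset.mem_union_left _ (Finset.mem_erase.mpr ⟨(G.ne_of_adj hw).symm, hwA⟩)
    · refine Finset.mem_union_right _ ?_
      simp only [hB, extNbhd, Finset.mem_filter, Finset.mem_univ, true_and]
      exact ⟨hwA, v, hv, hw⟩
  have hAcard : 5 ≤ A.card := by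
    obtain ⟨v, hv⟩ := hAne
    have h1 := hdeg v
    have h2 : (G.neighborFinset v).card ≤ (A.erase v ∪ B).card :=
      Finset.card_le_card (hnbr v hv)
    rw [card_neighborFinset_eq_degree] at h2
    have h3 : (A.erase v ∪ B).card ≤ (A.erase v).card + B.card := Finset.card_union_le _ _
    have h4 : (A.erase v).card = A.card - 1 := Finset.card_erase_of_mem hv
    have h5 : 1 ≤ A.card := Finset.card_pos.mpr ⟨v, hv⟩
    omega
  -- edge counting
  set F := G.edgeFinset.filter (fun e => ∃ v ∈ A, v ∈ e) with hF
  have hinc : ∀ v ∈ A, G.degree v = (F.filter (fun e => v ∈ e)).card := by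
    intro v hv
    rw [← card_incidenceFinset_eq_degree]
    congr 1
    ext e
    simp only [mem_incidenceFinset, hF, Finset.mem_filter, mem_edgeFinset]
    constructor
    · intro h
      rw [incidenceSet] at h
      exact ⟨⟨h.1, v, hv, h.2⟩, h.2⟩
    · intro ⟨⟨he, _⟩, hve⟩
      exact ⟨he, hve⟩
  have hsum : ∑ v ∈ A, G.degree v = ∑ e ∈ F, (A.filter (fun v => v ∈ e)).card := by
    rw [Finset.sum_congr rfl hinc]
    simp only [Finset.card_filter]
    rw [Finset.sum_comm]
  have hle2 : ∀ e ∈ F, (A.filter (fun v => v ∈ e)).card ≤ 2 := by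
    intro e _
    induction e with
    | h a b =>
      have : A.filter (fun v => v ∈ s(a, b)) ⊆ {a, b} := by
        intro v hv
        simp only [Finset.mem_filter, Sym2.mem_iff] at hv
        simp [hv.2]
      calc (A.filter (fun v => v ∈ s(a, b))).card ≤ ({a, b} : Finset V).card :=
            Finset.card_le_card this
        _ ≤ 2 := Finset.card_le_two
  have h12 : 12 * A.card ≤ ∑ v ∈ A, G.degree v := by
    calc 12 * A.card = ∑ _v ∈ A, 12 := by rw [Finset.sum_const, smul_eq_mul, mul_comm]
      _ ≤ ∑ v ∈ A, G.degree v := Finset.sum_le_sum (fun v _ => hdeg v)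
  have hsum2 : ∑ e ∈ F, (A.filter (fun v => v ∈ e)).card ≤ 2 * F.card := by
    calc ∑ e ∈ F, (A.filter (fun v => v ∈ e)).card ≤ ∑ _e ∈ F, 2 :=
          Finset.sum_le_sum hle2
      _ = 2 * F.card := by rw [Finset.sum_const, smul_eq_mul, mul_comm]
  have hedges : 6 * A.card ≤ F.card := by omega
  exact ⟨A, B, hdisj, hAcard, hAk, hBcard, Finset.Subset.refl _, hedges, hclosed⟩
end

section
/- Define δ(n) = 15/(ln n)^{1/4} and k₀(n) = 6n/(ln n)^{1/2}. Then the sum S(n) = Σ_{i=5}^{⌊k₀(n)⌋} C(n,i) · C(n−i, 2i−1) · ((3i−2)/(δ(n)·n − 12))^{6i} tends to 0 as n → ∞. -/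
open Real Filter

set_option maxHeartbeats 1000000

/-- `δ(n) = 15 / (ln n)^{1/4}`. -/
noncomputable def deltaFn (n : ℕ) : ℝ := 15 / (Real.log n) ^ ((1 : ℝ) / 4)

/-- `k₀(n) = 6n / (ln n)^{1/2}`. -/
noncomputable def kZero (n : ℕ) : ℝ := 6 * n / (Real.log n) ^ ((1 : ℝ) / 2)

lemma aux_pow_div_exp_le_factorial (k : ℕ) :
    ((k : ℝ) / Real.exp 1) ^ k ≤ (k.factorial : ℝ) := by
  induction k with
  | zero => simp
  | succ k ih =>
    have he : (0:ℝ) < Real.exp 1 := Real.exp_pos 1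
    have key : ((k:ℝ) + 1) ^ k ≤ Real.exp 1 * (k:ℝ) ^ k := by
      rcases Nat.eq_zero_or_pos k with hk | hk
      · subst hk; simpa using Real.one_le_exp zero_le_one
      · have hk0 : (0:ℝ) < k := by exact_mod_cast hk
        have h1 : (k:ℝ) + 1 ≤ (k:ℝ) * Real.exp (1 / (k:ℝ)) := by
          have := Real.add_one_le_exp (1 / (k:ℝ))
          calc (k:ℝ) + 1 = (k:ℝ) * (1/(k:ℝ) + 1) := by field_simp; ring
            _ ≤ (k:ℝ) * Real.exp (1/(k:ℝ)) := mul_le_mul_of_nonneg_left this hk0.le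
        calc ((k:ℝ) + 1) ^ k ≤ ((k:ℝ) * Real.exp (1/(k:ℝ))) ^ k :=
              pow_le_pow_left₀ (by positivity) h1 k
          _ = (k:ℝ) ^ k * Real.exp 1 := by
              rw [mul_pow, ← Real.exp_nat_mul]
              congr 2
              field_simp
          _ = Real.exp 1 * (k:ℝ) ^ k := by ring
    have h2 : (((k:ℝ)+1)/Real.exp 1)^k ≤ Real.exp 1 * ((k:ℝ)/Real.exp 1)^k := by
      rw [div_pow, div_pow, div_le_iff₀ (by positivity)]
      calc ((k:ℝ)+1)^k ≤ Real.exp 1 * (k:ℝ)^k := key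
        _ = Real.exp 1 * ((k:ℝ)^k / Real.exp 1 ^ k) * Real.exp 1 ^ k := by
            field_simp
    have step : (((k:ℝ)+1) / Real.exp 1) ^ (k+1) ≤ ((k:ℝ)+1) * ((k:ℝ)/Real.exp 1) ^ k := by
      calc (((k:ℝ)+1) / Real.exp 1) ^ (k+1)
          = (((k:ℝ)+1)/Real.exp 1)^k * (((k:ℝ)+1)/Real.exp 1) := pow_succ _ _
        _ ≤ (Real.exp 1 * ((k:ℝ)/Real.exp 1)^k) * (((k:ℝ)+1)/Real.exp 1) :=
            mul_le_mul_of_nonneg_right h2 (by positivity)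
        _ = ((k:ℝ)+1) * ((k:ℝ)/Real.exp 1) ^ k := by
            field_simp
    calc ((((k+1:ℕ)):ℝ) / Real.exp 1) ^ (k+1)
        = (((k:ℝ)+1) / Real.exp 1) ^ (k+1) := by push_cast; ring_nf
      _ ≤ ((k:ℝ)+1) * ((k:ℝ)/Real.exp 1) ^ k := step
      _ ≤ ((k:ℝ)+1) * (k.factorial : ℝ) := mul_le_mul_of_nonneg_left ih (by positivity)
      _ = ((k+1).factorial : ℝ) := by rw [Nat.factorial_succ]; push_cast; ring

lemma aux_choose_le (n k : ℕ) (hk : 1 ≤ k) :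
    (n.choose k : ℝ) ≤ (Real.exp 1 * n / k) ^ k := by
  have he : (0:ℝ) < Real.exp 1 := Real.exp_pos 1
  have hk0 : (0:ℝ) < k := by exact_mod_cast hk
  calc (n.choose k : ℝ) ≤ (n:ℝ) ^ k / (k.factorial : ℝ) := Nat.choose_le_pow_div k n
    _ ≤ (n:ℝ) ^ k / ((k:ℝ)/Real.exp 1) ^ k := by
        apply div_le_div_of_nonneg_left (by positivity) (by positivity)
          (aux_pow_div_exp_le_factorial k)
    _ = (Real.exp 1 * n / k) ^ k := by
        rw [div_pow, div_pow, mul_pow]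
        field_simp

lemma aux_term_le (n i : ℕ) (hL : 16 ≤ Real.log n) (hn12 : 12 * Real.log n ≤ (n:ℝ))
    (hi : 5 ≤ i) (hik : (i:ℝ) ≤ kZero n) :
    (n.choose i : ℝ) * ((n - i).choose (2 * i - 1) : ℝ) *
      ((3 * (i:ℝ) - 2) / (deltaFn n * n - 12)) ^ (6 * i)
    ≤ (9 * Real.exp 1 * Real.log n ^ ((1:ℝ)/2) / (196 * n)) ^ 15 * (i:ℝ) ^ 15
        * ((27:ℝ)/64) ^ (i - 5) := by
  have he : (0:ℝ) < Real.exp 1 := Real.exp_pos 1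
  have he27 : Real.exp 1 < 2.7182818286 := Real.exp_one_lt_d9
  set L := Real.log n with hLdef
  have hL0 : (0:ℝ) < L := lt_of_lt_of_le (by norm_num) hL
  set t := L ^ ((1:ℝ)/4) with htdef
  have ht0 : (0:ℝ) < t := Real.rpow_pos_of_pos hL0 _
  have hst : L ^ ((1:ℝ)/2) = t ^ 2 := by
    rw [htdef, ← Real.rpow_natCast (L ^ ((1:ℝ)/4)) 2, ← Real.rpow_mul hL0.le]
    norm_num
  have ht4 : 2 ≤ t := by
    have h16 : (16:ℝ) ^ ((1:ℝ)/4) = 2 := by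
      rw [show (16:ℝ) = 2 ^ (4:ℕ) by norm_num, ← Real.rpow_natCast 2 4,
        ← Real.rpow_mul (by norm_num)]
      norm_num
    calc (2:ℝ) = (16:ℝ) ^ ((1:ℝ)/4) := h16.symm
      _ ≤ t := Real.rpow_le_rpow (by norm_num) hL (by norm_num)
  have hn0 : (0:ℝ) < n := by
    rcases Nat.eq_zero_or_pos n with h | h
    · exfalso; rw [h] at hLdef; rw [hLdef] at hL0; simp at hL0
    · exact_mod_cast h
  have hi5 : (5:ℝ) ≤ (i:ℝ) := by exact_mod_cast hi
  have hi0 : (0:ℝ) < i := by linarith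
  -- t ≤ L ≤ n/12
  have htL : t ≤ L := by
    calc t ≤ L ^ (1:ℝ) := Real.rpow_le_rpow_of_exponent_le (by linarith) (by norm_num)
      _ = L := Real.rpow_one L
  have htn : 12 * t ≤ (n:ℝ) := by linarith
  -- i ≤ 6 n / t^2
  have hik' : (i:ℝ) ≤ 6 * n / t ^ 2 := by
    rw [kZero, ← hLdef, hst] at hik; exact hik
  have hD15 : deltaFn n * n = 15 * n / t := by
    rw [deltaFn, ← hLdef, ← htdef]; ring
  -- denominator bound
  have hDeq : deltaFn n * n - 12 = 15 * n / t - 12 := by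
    rw [hD15]
  clear_value L t
  have hnt12 : (12:ℝ) ≤ n / t := by
    rw [le_div_iff₀ ht0]; linarith
  have hD14 : 14 * ((n:ℝ) / t) ≤ deltaFn n * n - 12 := by
    rw [hDeq]
    have : 15 * (n:ℝ) / t = 15 * ((n:ℝ)/t) := by ring
    rw [this]; linarith
  have hD0 : (0:ℝ) < deltaFn n * n - 12 := by
    have : (0:ℝ) < 14 * ((n:ℝ)/t) := by positivity
    linarith
  -- ratio bound
  set Q := 3 * (i:ℝ) * t / (14 * n) with hQdef
  clear_value Q
  have hq0 : (0:ℝ) ≤ (3 * (i:ℝ) - 2) / (deltaFn n * n - 12) := by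
    apply div_nonneg (by linarith) hD0.le
  have hqQ : (3 * (i:ℝ) - 2) / (deltaFn n * n - 12) ≤ Q := by
    have h1 : (3 * (i:ℝ) - 2) / (deltaFn n * n - 12) ≤ (3 * (i:ℝ)) / (14 * ((n:ℝ)/t)) := by
      apply div_le_div₀ (by positivity) (by linarith) (by positivity) hD14
    calc (3 * (i:ℝ) - 2) / (deltaFn n * n - 12) ≤ (3 * (i:ℝ)) / (14 * ((n:ℝ)/t)) := h1
      _ = Q := by rw [hQdef]; field_simp
  -- choose bounds
  set M := Real.exp 1 * (n:ℝ) / (i:ℝ) with hMdef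
  have hM0 : (0:ℝ) < M := by rw [hMdef]; positivity
  clear_value M
  have hM1 : (1:ℝ) ≤ M := by
    rw [hMdef, le_div_iff₀ hi0, one_mul]
    have h15 : (i:ℝ) ≤ 6 * n / 4 := by
      apply hik'.trans
      apply div_le_div_of_nonneg_left (by positivity) (by norm_num)
      nlinarith
    have he15 : (3:ℝ)/2 ≤ Real.exp 1 := by
      nlinarith [Real.exp_one_gt_d9]
    nlinarith [mul_le_mul_of_nonneg_right he15 hn0.le]
  have hc1 : (n.choose i : ℝ) ≤ M ^ i := by
    rw [hMdef]; exact aux_choose_le n i (by omega)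
  have hc2 : ((n - i).choose (2 * i - 1) : ℝ) ≤ M ^ (2 * i) := by
    have hcast : ((2 * i - 1 : ℕ) : ℝ) = 2 * (i:ℝ) - 1 := by
      push_cast [Nat.cast_sub (by omega : 1 ≤ 2 * i)]; ring
    have h1 : ((n - i).choose (2 * i - 1) : ℝ) ≤ (n.choose (2 * i - 1) : ℝ) := by
      exact_mod_cast Nat.choose_le_choose (2 * i - 1) (Nat.sub_le n i)
    have h2 : (n.choose (2 * i - 1) : ℝ) ≤ (Real.exp 1 * n / ((2 * i - 1 : ℕ):ℝ)) ^ (2 * i - 1) :=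
      aux_choose_le n (2 * i - 1) (by omega)
    have h3 : (Real.exp 1 * n / ((2 * i - 1 : ℕ):ℝ)) ≤ M := by
      rw [hcast, hMdef]
      apply div_le_div_of_nonneg_left (by positivity) hi0
      linarith
    have h4 : (Real.exp 1 * n / ((2 * i - 1 : ℕ):ℝ)) ^ (2 * i - 1) ≤ M ^ (2 * i - 1) := by
      apply pow_le_pow_left₀ (div_nonneg (by positivity) (by rw [hcast]; linarith)) h3
    have h5 : M ^ (2 * i - 1) ≤ M ^ (2 * i) :=
      pow_le_pow_right₀ hM1 (by omega)
    linarith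
  -- combine
  set a := 9 * Real.exp 1 * t ^ 2 / (196 * (n:ℝ)) with hadef
  have ha0 : (0:ℝ) ≤ a := by rw [hadef]; positivity
  clear_value a
  have hbase : M * Q ^ 2 = a * i := by
    rw [hMdef, hQdef, hadef]
    field_simp
    ring
  have hai : a * i ≤ 3 / 4 := by
    have h1 : a * i ≤ a * (6 * n / t ^ 2) := mul_le_mul_of_nonneg_left hik' ha0
    have h2 : a * (6 * n / t ^ 2) = 54 * Real.exp 1 / 196 := by
      rw [hadef]; field_simp; ring
    rw [h2] at h1
    nlinarith
  have hmain : (n.choose i : ℝ) * ((n - i).choose (2 * i - 1) : ℝ) *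
      ((3 * (i:ℝ) - 2) / (deltaFn n * n - 12)) ^ (6 * i) ≤ (a * i) ^ (3 * i) := by
    calc (n.choose i : ℝ) * ((n - i).choose (2 * i - 1) : ℝ) *
        ((3 * (i:ℝ) - 2) / (deltaFn n * n - 12)) ^ (6 * i)
        ≤ M ^ i * M ^ (2 * i) * Q ^ (6 * i) := by
          apply mul_le_mul
          · apply mul_le_mul hc1 hc2 (by positivity) (by positivity)
          · exact pow_le_pow_left₀ hq0 hqQ _
          · exact Even.pow_nonneg ⟨3 * i, by ring⟩ _
          · positivity
      _ = (M * Q ^ 2) ^ (3 * i) := by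
          rw [mul_pow, ← pow_mul, ← pow_add, show i + 2 * i = 3 * i from by ring,
            show 2 * (3 * i) = 6 * i from by ring]
      _ = (a * i) ^ (3 * i) := by rw [hbase]
  have hfinal : (a * i) ^ (3 * i) ≤ a ^ 15 * (i:ℝ) ^ 15 * ((27:ℝ)/64) ^ (i - 5) := by
    calc (a * i) ^ (3 * i) = (a * i) ^ 15 * (a * i) ^ (3 * i - 15) := by
          rw [← pow_add]; congr 1; omega
      _ ≤ (a * i) ^ 15 * ((3:ℝ)/4) ^ (3 * i - 15) := by
          apply mul_le_mul_of_nonneg_left _ (by positivity)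
          exact pow_le_pow_left₀ (by positivity) hai _
      _ = a ^ 15 * (i:ℝ) ^ 15 * ((27:ℝ)/64) ^ (i - 5) := by
          rw [mul_pow, show 3 * i - 15 = 3 * (i - 5) from by omega, pow_mul]
          norm_num
  rw [hst, ← hadef]
  exact hmain.trans hfinal

noncomputable def auxC : ℝ := (∑' j : ℕ, (j:ℝ) ^ 15 * ((27:ℝ)/64) ^ j) * ((64:ℝ)/27) ^ 5

lemma aux_summable : Summable (fun j : ℕ => (j:ℝ) ^ 15 * ((27:ℝ)/64) ^ j) := by
  apply summable_pow_mul_geometric_of_norm_lt_one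
  rw [Real.norm_eq_abs]; rw [abs_of_nonneg (by norm_num)]; norm_num

lemma aux_sum_le (K : ℕ) :
    ∑ i ∈ Finset.Icc 5 K, (i:ℝ) ^ 15 * ((27:ℝ)/64) ^ (i - 5) ≤ auxC := by
  have hg : ∀ i ∈ Finset.Icc 5 K, (i:ℝ) ^ 15 * ((27:ℝ)/64) ^ (i - 5)
      = ((i:ℝ) ^ 15 * ((27:ℝ)/64) ^ i) * ((64:ℝ)/27) ^ 5 := by
    intro i hi
    rw [Finset.mem_Icc] at hi
    have : ((27:ℝ)/64) ^ i = ((27:ℝ)/64) ^ (i - 5) * ((27:ℝ)/64) ^ 5 := by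
      rw [← pow_add]; congr 1; omega
    rw [this]; ring_nf
  rw [Finset.sum_congr rfl hg, ← Finset.sum_mul, auxC]
  apply mul_le_mul_of_nonneg_right _ (by positivity)
  apply Summable.sum_le_tsum _ (fun i _ => by positivity) aux_summable

theorem stmt8 :
    Filter.Tendsto
      (fun n : ℕ =>
        ∑ i ∈ Finset.Icc 5 ⌊kZero n⌋₊,
          (n.choose i : ℝ) * ((n - i).choose (2 * i - 1) : ℝ) *
            ((3 * (i : ℝ) - 2) / (deltaFn n * n - 12)) ^ (6 * i))
      Filter.atTop (nhds 0) := by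
  have he : (0:ℝ) < Real.exp 1 := Real.exp_pos 1
  set S := fun n : ℕ =>
        ∑ i ∈ Finset.Icc 5 ⌊kZero n⌋₊,
          (n.choose i : ℝ) * ((n - i).choose (2 * i - 1) : ℝ) *
            ((3 * (i : ℝ) - 2) / (deltaFn n * n - 12)) ^ (6 * i) with hS
  set g := fun n : ℕ => 9 * Real.exp 1 * Real.log n ^ ((1:ℝ)/2) / (196 * (n:ℝ)) with hg
  set B := fun n : ℕ => g n ^ 15 * auxC with hB
  -- eventual hypotheses
  have hcast : Tendsto (fun n : ℕ => (n:ℝ)) atTop atTop := tendsto_natCast_atTop_atTop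
  have hlog : Tendsto (fun n : ℕ => Real.log n) atTop atTop :=
    Real.tendsto_log_atTop.comp hcast
  have E1 : ∀ᶠ n : ℕ in atTop, 16 ≤ Real.log n := hlog.eventually_ge_atTop 16
  have E2 : ∀ᶠ n : ℕ in atTop, 12 * Real.log n ≤ (n:ℝ) := by
    have h := Real.isLittleO_log_id_atTop.def (by norm_num : (0:ℝ) < 1/12)
    filter_upwards [hcast.eventually h, E1] with n hn h16
    rw [Real.norm_eq_abs, Real.norm_eq_abs, id] at hn
    rw [abs_of_nonneg (by linarith), abs_of_nonneg (by positivity)] at hn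
    linarith
  -- lower bound
  have hlow : ∀ n, 0 ≤ S n := by
    intro n
    apply Finset.sum_nonneg
    intro i _
    apply mul_nonneg (mul_nonneg (Nat.cast_nonneg _) (Nat.cast_nonneg _))
    exact Even.pow_nonneg ⟨3 * i, by ring⟩ _
  -- upper bound
  have hup : ∀ᶠ n : ℕ in atTop, S n ≤ B n := by
    filter_upwards [E1, E2] with n h16 h12
    have hL0 : (0:ℝ) < Real.log n := by linarith
    calc S n ≤ ∑ i ∈ Finset.Icc 5 ⌊kZero n⌋₊,
          g n ^ 15 * (i:ℝ) ^ 15 * ((27:ℝ)/64) ^ (i - 5) := by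
          apply Finset.sum_le_sum
          intro i hi
          rw [Finset.mem_Icc] at hi
          apply aux_term_le n i h16 h12 hi.1
          calc (i:ℝ) ≤ (⌊kZero n⌋₊ : ℝ) := by exact_mod_cast hi.2
            _ ≤ kZero n := Nat.floor_le (by rw [kZero]; positivity)
      _ = g n ^ 15 * ∑ i ∈ Finset.Icc 5 ⌊kZero n⌋₊,
            (i:ℝ) ^ 15 * ((27:ℝ)/64) ^ (i - 5) := by
          rw [Finset.mul_sum]
          apply Finset.sum_congr rfl
          intro i _; ring
      _ ≤ g n ^ 15 * auxC := by
          apply mul_le_mul_of_nonneg_left (aux_sum_le _) (by positivity)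
      _ = B n := rfl
  -- B tends to 0
  have hgto : Tendsto g atTop (nhds 0) := by
    have h0 : Tendsto (fun x : ℝ => Real.log x / x) atTop (nhds 0) :=
      Real.isLittleO_log_id_atTop.tendsto_div_nhds_zero
    have h1 : Tendsto (fun n : ℕ => Real.log n / (n:ℝ)) atTop (nhds 0) := h0.comp hcast
    have h2 : Tendsto (fun n : ℕ => 9 * Real.exp 1 / 196 * (Real.log n / (n:ℝ))) atTop (nhds 0) := by
      have := h1.const_mul (9 * Real.exp 1 / 196)
      simpa using this
    apply tendsto_of_tendsto_of_tendsto_of_le_of_le' tendsto_const_nhds h2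
    · filter_upwards [E1] with n h16
      have hL0 : (0:ℝ) < Real.log n := by linarith
      rw [hg]; positivity
    · filter_upwards [E1, E2] with n h16 h12
      have hL0 : (1:ℝ) ≤ Real.log n := by linarith
      have hn0 : (0:ℝ) < n := by nlinarith
      have hs : Real.log n ^ ((1:ℝ)/2) ≤ Real.log n := by
        calc Real.log n ^ ((1:ℝ)/2) ≤ Real.log n ^ (1:ℝ) :=
              Real.rpow_le_rpow_of_exponent_le hL0 (by norm_num)
          _ = Real.log n := Real.rpow_one _
      calc g n = 9 * Real.exp 1 * Real.log n ^ ((1:ℝ)/2) / (196 * (n:ℝ)) := rfl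
        _ ≤ 9 * Real.exp 1 * Real.log n / (196 * (n:ℝ)) := by
            gcongr
        _ = 9 * Real.exp 1 / 196 * (Real.log n / (n:ℝ)) := by ring
  have hBto : Tendsto B atTop (nhds 0) := by
    have h15 : Tendsto (fun n => g n ^ 15) atTop (nhds 0) := by
      have := hgto.pow 15
      simpa using this
    have := h15.mul_const auxC
    simpa using this
  exact tendsto_of_tendsto_of_tendsto_of_le_of_le' tendsto_const_nhds hBto
    (Eventually.of_forall hlow) hup
end

section
/- Define δ(n) = 15/(ln n)^{1/4} and k₀(n) = 6n/(ln n)^{1/2}. For all sufficiently large n and every integer i with 5 ≤ i ≤ k₀(n), one has C(n,i) · C(n−i, 2i−1) · ((3i−2)/(δ(n)·n − 12))^{6i} ≤ (4⁵ · e³ · (i/n)³ · δ(n)^{−6})^{i}. -/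
/-!
With `a = e n / i`, the estimate `C(m, k) ≤ (e m / k)^k` bounds both binomial coefficients:
`C(n, i) · C(n - i, 2i - 1) ≤ a^{3i}`. Since `(ln n)^{1/4} ≤ n^{1/4}`, we have `δ(n)·n ≥ 228` for
`n ≥ 46`, hence `δ(n)·n - 12 ≥ (18/19) δ(n)·n` and the ratio is at most `c = 19 i / (6 δ(n)·n)`. Finally
`a³ c⁶ = (19/6)⁶ e³ (i/n)³ δ⁻⁶` and `(19/6)⁶ < 4⁵`.
-/

open Real Filter

lemma pow_le_exp_pow_mul_factorial (k : ℕ) : (k : ℝ) ^ k ≤ exp 1 ^ k * k.factorial := by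
  have h := pow_div_factorial_le_exp (k : ℝ) (Nat.cast_nonneg k) k
  rw [div_le_iff₀ (by positivity)] at h
  rwa [← exp_one_pow] at h

lemma choose_le_exp_mul_div_pow (m k : ℕ) : (m.choose k : ℝ) ≤ (exp 1 * m / k) ^ k := by
  rcases k.eq_zero_or_pos with rfl | hk
  · simp
  have hk0 : (0 : ℝ) < k := by exact_mod_cast hk
  calc (m.choose k : ℝ) ≤ (m : ℝ) ^ k / k.factorial := Nat.choose_le_pow_div k m
    _ = (m / k : ℝ) ^ k * (k ^ k / k.factorial) := by
        rw [div_pow]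
        field_simp
    _ ≤ (m / k : ℝ) ^ k * exp 1 ^ k := by
        gcongr
        rw [div_le_iff₀ (by positivity)]
        exact pow_le_exp_pow_mul_factorial k
    _ = (exp 1 * m / k) ^ k := by ring

lemma choose_sub_le_exp_mul_div_pow {n i : ℕ} (hi : 1 ≤ i) (hin : i ≤ n) :
    ((n - i).choose (2 * i - 1) : ℝ) ≤ (exp 1 * n / i) ^ (2 * i) := by
  have hi0 : (0 : ℝ) < i := by exact_mod_cast hi
  have hiR : (1 : ℝ) ≤ i := by exact_mod_cast hi
  have hinR : (i : ℝ) ≤ n := by exact_mod_cast hin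
  have hbase : exp 1 * ((n - i : ℕ) : ℝ) / ((2 * i - 1 : ℕ) : ℝ) ≤ exp 1 * n / i := by
    rw [Nat.cast_sub hin, Nat.cast_sub (by omega), div_le_div_iff₀ (by push_cast; linarith) hi0]
    push_cast
    have : ((n : ℝ) - i) * i ≤ n * (2 * i - 1) := by nlinarith
    nlinarith [exp_pos 1]
  have hone : 1 ≤ exp 1 * n / i := by
    rw [le_div_iff₀ hi0]
    nlinarith [add_one_le_exp 1]
  calc ((n - i).choose (2 * i - 1) : ℝ)
      ≤ (exp 1 * ((n - i : ℕ) : ℝ) / ((2 * i - 1 : ℕ) : ℝ)) ^ (2 * i - 1) :=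
        choose_le_exp_mul_div_pow _ _
    _ ≤ (exp 1 * n / i) ^ (2 * i - 1) := by gcongr
    _ ≤ (exp 1 * n / i) ^ (2 * i) := pow_le_pow_right₀ hone (by omega)

lemma div_sub_twelve_le {x D : ℝ} (hx : 1 ≤ x) (hD : 228 ≤ D) :
    (3 * x - 2) / (D - 12) ≤ 19 * x / (6 * D) := by
  rw [div_le_div_iff₀ (by linarith) (by linarith)]
  nlinarith

theorem choose_mul_choose_mul_pow_le {n i : ℕ} {δ : ℝ} (hi : 1 ≤ i) (hin : i ≤ n)
    (hδ : 228 ≤ δ * n) :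
    (n.choose i : ℝ) * ((n - i).choose (2 * i - 1) : ℝ) *
        ((3 * (i : ℝ) - 2) / (δ * n - 12)) ^ (6 * i)
      ≤ (4 ^ 5 * exp 1 ^ 3 * ((i : ℝ) / n) ^ 3 * δ ^ (-6 : ℤ)) ^ i := by
  have hi0 : (0 : ℝ) < i := by exact_mod_cast hi
  have hiR : (1 : ℝ) ≤ i := by exact_mod_cast hi
  have hn0 : (0 : ℝ) < n := by exact_mod_cast hi.trans hin
  have hδ0 : 0 < δ := pos_of_mul_pos_left (by linarith) hn0.le
  set a := exp 1 * n / i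
  set c := 19 * (i : ℝ) / (6 * (δ * n))
  have hq0 : 0 ≤ (3 * (i : ℝ) - 2) / (δ * n - 12) := div_nonneg (by linarith) (by linarith)
  have hratio : ((3 * (i : ℝ) - 2) / (δ * n - 12)) ^ (6 * i) ≤ c ^ (6 * i) :=
    pow_le_pow_left₀ hq0 (div_sub_twelve_le hiR hδ) _
  calc _ ≤ a ^ i * a ^ (2 * i) * c ^ (6 * i) := by
        refine mul_le_mul (mul_le_mul ?_ ?_ (by positivity) (by positivity)) hratio
          (pow_nonneg hq0 _) (by positivity)
        · exact choose_le_exp_mul_div_pow n i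
        · exact choose_sub_le_exp_mul_div_pow hi hin
    _ = (a ^ 3 * c ^ 6) ^ i := by ring_nf
    _ = ((19 / 6) ^ 6 * exp 1 ^ 3 * ((i : ℝ) / n) ^ 3 * δ ^ (-6 : ℤ)) ^ i := by
        simp only [a, c, zpow_neg]
        field_simp
    _ ≤ _ := by gcongr; norm_num

lemma le_div_mul_of_pow_four_le {t x : ℝ} (ht : 0 < t) (htx : t ^ 4 ≤ x) (hx : 46 ≤ x) :
    228 ≤ 15 / t * x := by
  rw [div_mul_eq_mul_div, le_div_iff₀ ht]
  rcases le_total t 3 with h | h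
  · linarith
  · nlinarith [pow_le_pow_left₀ (by norm_num : (0 : ℝ) ≤ 3) h 3]

lemma le_deltaFn_mul {n : ℕ} (hn : 46 ≤ n) : 228 ≤ deltaFn n * n := by
  have hn' : (46 : ℝ) ≤ n := by exact_mod_cast hn
  have hlog : 0 < log n := log_pos (by linarith)
  refine le_div_mul_of_pow_four_le (rpow_pos_of_pos hlog _) ?_ hn'
  rw [← rpow_natCast, ← rpow_mul hlog.le, show (1 : ℝ) / 4 * (4 : ℕ) = 1 by norm_num, rpow_one]
  exact log_le_self (by linarith)

lemma kZero_le_self {n : ℕ} (hn : 36 ≤ log n) : kZero n ≤ n := by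
  have hsqrt : (6 : ℝ) ≤ log n ^ ((1 : ℝ) / 2) := by
    rw [← sqrt_eq_rpow, le_sqrt (by norm_num) (by linarith)]
    linarith
  rw [kZero, div_le_iff₀ (by linarith)]
  nlinarith [Nat.cast_nonneg (α := ℝ) n]

theorem stmt9 :
    ∀ᶠ n : ℕ in Filter.atTop, ∀ i : ℕ, 5 ≤ i → (i : ℝ) ≤ kZero n →
      (n.choose i : ℝ) * ((n - i).choose (2 * i - 1) : ℝ) *
          ((3 * (i : ℝ) - 2) / (deltaFn n * n - 12)) ^ (6 * i)
        ≤ (4 ^ 5 * Real.exp 1 ^ 3 * ((i : ℝ) / n) ^ 3 * deltaFn n ^ (-6 : ℤ)) ^ i := by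
  have hlog : ∀ᶠ n : ℕ in atTop, (36 : ℝ) ≤ log n :=
    (tendsto_log_atTop.comp tendsto_natCast_atTop_atTop).eventually_ge_atTop 36
  filter_upwards [hlog, eventually_ge_atTop 46] with n hlogn hn i hi hik
  have hin : i ≤ n := by exact_mod_cast hik.trans (kZero_le_self hlogn)
  exact choose_mul_choose_mul_pow_le (by omega) hin (le_deltaFn_mul hn)
end
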